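/- arXiv:2004.14632 — 9 statements merged into one kernel-verified Lean document; each statement's English description precedes it below -/
import Mathlib

section
/- Let n ≥ 2, P_3 = [n]^3, and L_3 the set of axis-parallel grid lines intersecting P_3. Then (P_3, L_3) is not 4-separable: there exist distinct 4-element sets Y, Z ⊆ P_3 hitting the same set of lines. -/
/-!
Embed the cube `{0, 1}^3` in the grid and split its corners by the parity of their
coordinate sum. Flipping one coordinate of a corner changes its parity and keeps it on
every axis-parallel line in the flipped direction, so each line through a corner of one
parity class also passes through a corner of the other. Both classes have `2^3 / 2 = 4`
elements and are disjoint.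
-/

open Finset

section ParityClass

variable {ι : Type*} [Fintype ι] [DecidableEq ι]

variable (ι) in
def parityClass (c : ZMod 2) : Finset (ι → ZMod 2) :=
  univ.filter fun b => ∑ j, b j = c

lemma mem_parityClass {b : ι → ZMod 2} {c : ZMod 2} : b ∈ parityClass ι c ↔ ∑ j, b j = c := by
  simp [parityClass]

lemma add_single_mem_parityClass {b : ι → ZMod 2} {c : ZMod 2} (i : ι)
    (hb : b ∈ parityClass ι c) : b + Pi.single i 1 ∈ parityClass ι (c + 1) := by
  rw [mem_parityClass] at hb ⊢
  simp [Finset.sum_add_distrib, hb]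

lemma card_parityClass_add_one (i : ι) (c : ZMod 2) :
    #(parityClass ι (c + 1)) = #(parityClass ι c) := by
  have hflip (b : ι → ZMod 2) : b + Pi.single i 1 + Pi.single i 1 = b := by
    rw [add_assoc, ← Pi.single_add, CharTwo.add_self_eq_zero, Pi.single_zero, add_zero]
  refine card_nbij' (fun b => b + Pi.single i 1) (fun b => b + Pi.single i 1) (fun b hb => ?_)
    (fun b hb => add_single_mem_parityClass i hb) (fun b _ => hflip b) (fun b _ => hflip b)
  simpa [CharTwo.add_cancel_right] using add_single_mem_parityClass (c := c + 1) i hb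

lemma disjoint_parityClass_add_one (c : ZMod 2) :
    Disjoint (parityClass ι c) (parityClass ι (c + 1)) := by
  refine disjoint_left.2 fun b hc hc' => ?_
  rw [mem_parityClass] at hc hc'
  have hc1 : c = c + 1 := hc.symm.trans hc'
  simp at hc1

lemma card_parityClass [Nonempty ι] (c : ZMod 2) :
    #(parityClass ι c) = 2 ^ (Fintype.card ι - 1) := by
  obtain ⟨i⟩ := ‹Nonempty ι›
  have hunion : parityClass ι c ∪ parityClass ι (c + 1) = univ := by
    refine eq_univ_of_forall fun b => mem_union.2 ?_
    simp only [mem_parityClass]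
    have hcases : ∀ s c : ZMod 2, s = c ∨ s = c + 1 := by decide
    exact hcases _ c
  have htotal : #(parityClass ι c) + #(parityClass ι (c + 1)) = 2 ^ Fintype.card ι := by
    rw [← card_union_of_disjoint (disjoint_parityClass_add_one c), hunion, card_univ,
      Fintype.card_fun, ZMod.card]
  rw [card_parityClass_add_one i] at htotal
  obtain ⟨k, hk⟩ := Nat.exists_eq_add_one.2 (Fintype.card_pos (α := ι))
  rw [hk, pow_succ] at htotal
  rw [hk, Nat.add_sub_cancel]
  omega

end ParityClass

section CubeCorners

variable {ι α : Type*} [Fintype ι] [DecidableEq ι]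

/-- The corners of the cube `f({0, 1})^ι` whose preimages have coordinate sum `c`. -/
def cubeCorners (f : ZMod 2 ↪ α) (c : ZMod 2) : Finset (ι → α) :=
  (parityClass ι c).map f.arrowCongrRight

lemma exists_cubeCorners_add_one_eq_off (f : ZMod 2 ↪ α) {c : ZMod 2} (i : ι) {y : ι → α}
    (hy : y ∈ cubeCorners f c) : ∃ z ∈ cubeCorners f (c + 1), ∀ j, j ≠ i → z j = y j := by
  obtain ⟨b, hb, rfl⟩ := mem_map.1 hy
  refine ⟨f.arrowCongrRight (b + Pi.single i 1),
    mem_map_of_mem _ (add_single_mem_parityClass i hb), fun j hj => ?_⟩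
  simp [Function.Embedding.arrowCongrRight_apply, Pi.single_eq_of_ne hj]

lemma cubeCorners_hit_same_lines (f : ZMod 2 ↪ α) (c : ZMod 2) (i : ι) (a : ι → α) :
    (∃ y ∈ cubeCorners f c, ∀ j, j ≠ i → y j = a j) ↔
      (∃ z ∈ cubeCorners f (c + 1), ∀ j, j ≠ i → z j = a j) := by
  have transfer (c' : ZMod 2) :
      (∃ y ∈ cubeCorners f c', ∀ j, j ≠ i → y j = a j) →
        ∃ z ∈ cubeCorners f (c' + 1), ∀ j, j ≠ i → z j = a j := by
    rintro ⟨y, hy, hya⟩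
    obtain ⟨z, hz, hzy⟩ := exists_cubeCorners_add_one_eq_off f i hy
    exact ⟨z, hz, fun j hj => (hzy j hj).trans (hya j hj)⟩
  refine ⟨transfer c, fun h => ?_⟩
  simpa [CharTwo.add_cancel_right] using transfer (c + 1) h

lemma card_cubeCorners [Nonempty ι] (f : ZMod 2 ↪ α) (c : ZMod 2) :
    #(cubeCorners (ι := ι) f c) = 2 ^ (Fintype.card ι - 1) := by
  rw [cubeCorners, card_map, card_parityClass]

lemma cubeCorners_ne_add_one [Nonempty ι] (f : ZMod 2 ↪ α) (c : ZMod 2) :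
    cubeCorners (ι := ι) f c ≠ cubeCorners f (c + 1) := by
  intro h
  have hdisj : Disjoint (cubeCorners (ι := ι) f c) (cubeCorners f (c + 1)) :=
    (disjoint_map _).2 (disjoint_parityClass_add_one c)
  rw [← h, disjoint_self_iff_empty] at hdisj
  have hcard := card_cubeCorners (ι := ι) f c
  rw [hdisj, card_empty] at hcard
  exact (pow_pos two_pos _).ne hcard

end CubeCorners

/-- The grid `[n]^3` with the axis-parallel grid lines as tests is not 4-separable:
there are distinct 4-element sets `Y, Z` of grid points hitting exactly the same set of
grid lines. -/
theorem gridLines_not_four_separable (n : ℕ) (hn : 2 ≤ n) :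
    ∃ Y Z : Finset (Fin 3 → Fin n), Y ≠ Z ∧ Y.card = 4 ∧ Z.card = 4 ∧
      ∀ (i : Fin 3) (a : Fin 3 → Fin n),
        (∃ y ∈ Y, ∀ j, j ≠ i → y j = a j) ↔ (∃ z ∈ Z, ∀ j, j ≠ i → z j = a j) := by
  let f : ZMod 2 ↪ Fin n := Fin.castLEEmb hn
  have hcard (c : ZMod 2) : #(cubeCorners (ι := Fin 3) f c) = 4 := by
    simp [card_cubeCorners]
  exact ⟨cubeCorners f 0, cubeCorners f 1, cubeCorners_ne_add_one f 0, hcard 0, hcard 1,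
    cubeCorners_hit_same_lines f 0⟩
end

section
/- For d ≥ 4 and n ≥ 3, the set system (P_d, L_d) with P_d = [n]^d and L_d the axis-parallel grid lines is not (2d−1)-separable: there exist distinct (2d−1)-element subsets of P_d hitting the same set of grid lines. -/
/-- For `d ≥ 4` and `n ≥ 3`, the grid `[n]^d` with the axis-parallel grid lines as tests
is not `(2d-1)`-separable: there are distinct `(2d-1)`-element sets of grid points
hitting exactly the same set of grid lines. -/
theorem gridLines_not_separable (d n : ℕ) (hd : 4 ≤ d) (hn : 3 ≤ n) :
    ∃ Y Z : Finset (Fin d → Fin n), Y ≠ Z ∧ Y.card = 2 * d - 1 ∧ Z.card = 2 * d - 1 ∧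
      ∀ (i : Fin d) (a : Fin d → Fin n),
        (∃ y ∈ Y, ∀ j, j ≠ i → y j = a j) ↔ (∃ z ∈ Z, ∀ j, j ≠ i → z j = a j) := by
  have hd0 : 0 < d := by omega
  set z0 : Fin n := ⟨0, by omega⟩ with hz0
  set z1 : Fin n := ⟨1, by omega⟩ with hz1
  set z2 : Fin n := ⟨2, by omega⟩ with hz2
  have h01 : z0 ≠ z1 := by simp [hz0, hz1, Fin.ext_iff]
  have h02 : z0 ≠ z2 := by simp [hz0, hz2, Fin.ext_iff]
  have h12 : z1 ≠ z2 := by simp [hz1, hz2, Fin.ext_iff]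
  set i0 : Fin d := ⟨0, hd0⟩ with hi0
  set x : Fin d → Fin n := fun _ => z0 with hx
  set y : Fin d → Fin n := fun j => if j = i0 then z1 else z0 with hy
  set xf : Fin d → (Fin d → Fin n) := fun i j => if j = i then z2 else z0 with hxf
  set yf : Fin d → (Fin d → Fin n) :=
    fun i j => if j = i then z2 else if j = i0 then z1 else z0 with hyf
  set T : Finset (Fin d) := {i0}ᶜ with hT
  have hmemT : ∀ i : Fin d, i ∈ T ↔ i ≠ i0 := by
    intro i; simp [hT]
  set S : Finset (Fin d → Fin n) := T.image xf ∪ T.image yf with hS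
  -- injectivity
  have hxfinj : Set.InjOn xf T := by
    intro i _ i' _ h
    by_contra hne
    have := congrFun h i
    simp [hxf, hne] at this
    exact h02 this.symm
  have hyfinj : Set.InjOn yf T := by
    intro i hi i' _ h
    by_contra hne
    have hi2 : i ≠ i0 := by simpa [hT] using hi
    have := congrFun h i
    simp [hyf, hne, hi2] at this
    exact h02 this.symm
  have hdisj : Disjoint (T.image xf) (T.image yf) := by
    rw [Finset.disjoint_left]
    rintro p hp hq
    obtain ⟨i, hi, rfl⟩ := Finset.mem_image.mp hp
    obtain ⟨i', hi', he⟩ := Finset.mem_image.mp hq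
    rw [hmemT] at hi hi'
    have := congrFun he i0
    simp [hxf, hyf, Ne.symm hi, Ne.symm hi'] at this
    exact h01 this.symm
  have hTcard : T.card = d - 1 := by
    rw [hT, Finset.card_compl]
    simp
  have hScard : S.card = 2 * d - 2 := by
    rw [hS, Finset.card_union_of_disjoint hdisj,
      Finset.card_image_of_injOn hxfinj, Finset.card_image_of_injOn hyfinj, hTcard]
    omega
  have hxnotS : x ∉ S := by
    rw [hS, Finset.mem_union]
    rintro (h | h)
    · obtain ⟨i, hi, he⟩ := Finset.mem_image.mp h
      have := congrFun he i
      simp [hxf, hx] at this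
      exact h02 this.symm
    · obtain ⟨i, hi, he⟩ := Finset.mem_image.mp h
      have := congrFun he i
      simp [hyf, hx] at this
      exact h02 this.symm
  have hynotS : y ∉ S := by
    rw [hS, Finset.mem_union]
    rintro (h | h)
    · obtain ⟨i, hi, he⟩ := Finset.mem_image.mp h
      have := congrFun he i0
      rw [hmemT] at hi
      simp [hxf, hy, Ne.symm hi] at this
      exact h01 this
    · obtain ⟨i, hi, he⟩ := Finset.mem_image.mp h
      have := congrFun he i
      rw [hmemT] at hi
      simp [hyf, hy, hi] at this
      exact h02 this.symm
  have hxy : x ≠ y := by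
    intro h
    have := congrFun h i0
    simp [hx, hy] at this
    exact h01 this
  refine ⟨insert x S, insert y S, ?_, ?_, ?_, ?_⟩
  · intro h
    have hxmem : x ∈ insert y S := h ▸ Finset.mem_insert_self x S
    rcases Finset.mem_insert.mp hxmem with h' | h'
    · exact hxy h'
    · exact hxnotS h'
  · rw [Finset.card_insert_of_notMem hxnotS, hScard]; omega
  · rw [Finset.card_insert_of_notMem hynotS, hScard]; omega
  · intro i a
    constructor
    · rintro ⟨p, hp, hpa⟩
      rcases Finset.mem_insert.mp hp with rfl | hpS
      · -- p = x
        by_cases hii : i = i0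
        · subst hii
          refine ⟨y, Finset.mem_insert_self y S, fun j hj => ?_⟩
          rw [← hpa j hj]
          simp [hy, hj, hx]
        · refine ⟨xf i, Finset.mem_insert_of_mem ?_, fun j hj => ?_⟩
          · exact Finset.mem_union_left _ (Finset.mem_image_of_mem xf ((hmemT i).mpr hii))
          · rw [← hpa j hj]
            simp [hxf, hj, hx]
      · exact ⟨p, Finset.mem_insert_of_mem hpS, hpa⟩
    · rintro ⟨p, hp, hpa⟩
      rcases Finset.mem_insert.mp hp with rfl | hpS
      · -- p = y
        by_cases hii : i = i0
        · subst hii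
          refine ⟨x, Finset.mem_insert_self x S, fun j hj => ?_⟩
          rw [← hpa j hj]
          simp [hy, hj, hx]
        · refine ⟨yf i, Finset.mem_insert_of_mem ?_, fun j hj => ?_⟩
          · exact Finset.mem_union_right _ (Finset.mem_image_of_mem yf ((hmemT i).mpr hii))
          · rw [← hpa j hj]
            simp [hyf, hy, hj]
      · exact ⟨p, Finset.mem_insert_of_mem hpS, hpa⟩
end

section
/- Let n ≥ 2 and P_3 = [n]^3, L_3 the axis-parallel grid lines through P_3. Then (P_3, L_3) is 3-separable: there are no two distinct 3-element sets Y, Z ⊆ P_3 hitting exactly the same set of grid lines. -/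
/-- Key structural lemma: if every line hit by `Y` is hit by `Z`, both have 3 points,
and `p ∈ Y \ Z`, then every point of `Z` agrees with `p` off some coordinate. -/
lemma gridLines_key {n : ℕ} (Y Z : Finset (Fin 3 → Fin n)) (hY : Y.card = 3)
    (hZ : Z.card = 3)
    (h : ∀ (i : Fin 3) (a : Fin 3 → Fin n),
      (∃ y ∈ Y, ∀ j, j ≠ i → y j = a j) → (∃ z ∈ Z, ∀ j, j ≠ i → z j = a j))
    (p : Fin 3 → Fin n) (hpY : p ∈ Y) (hpZ : p ∉ Z) :
    ∀ z ∈ Z, ∃ m : Fin 3, ∀ l, l ≠ m → z l = p l := by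
  have hex : ∀ i : Fin 3, ∃ z ∈ Z, ∀ l, l ≠ i → z l = p l := fun i =>
    h i p ⟨p, hpY, fun _ _ => rfl⟩
  choose f hf hf' using hex
  have hinj : Function.Injective f := by
    intro i i' hii'
    by_contra hne
    apply hpZ
    have hfp : f i = p := by
      funext l
      rcases ne_or_eq l i with hl | rfl
      · exact hf' i l hl
      · rw [hii']; exact hf' i' l hne
    rw [← hfp]; exact hf i
  have hsub : Finset.image f Finset.univ ⊆ Z := by
    intro x hx
    obtain ⟨i, _, rfl⟩ := Finset.mem_image.mp hx
    exact hf i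
  have hcard : Z.card ≤ (Finset.image f Finset.univ).card := by
    rw [Finset.card_image_of_injective _ hinj, hZ, Finset.card_univ, Fintype.card_fin]
  have heq : Finset.image f Finset.univ = Z :=
    Finset.eq_of_subset_of_card_le hsub hcard
  intro z hz
  rw [← heq] at hz
  obtain ⟨i, _, rfl⟩ := Finset.mem_image.mp hz
  exact ⟨i, hf' i⟩

/-- The grid `[n]^3` with the axis-parallel grid lines as tests is 3-separable:
no two distinct 3-element sets of grid points hit exactly the same set of grid lines. -/
theorem gridLines_three_separable (n : ℕ) (hn : 2 ≤ n) :
    ∀ Y Z : Finset (Fin 3 → Fin n), Y.card = 3 → Z.card = 3 → Y ≠ Z →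
      ¬ (∀ (i : Fin 3) (a : Fin 3 → Fin n),
          (∃ y ∈ Y, ∀ j, j ≠ i → y j = a j) ↔ (∃ z ∈ Z, ∀ j, j ≠ i → z j = a j)) := by
  intro Y Z hY hZ hne h
  -- extract p ∈ Y \ Z and q ∈ Z \ Y
  have hns : ¬ Y ⊆ Z := fun hs => hne (Finset.eq_of_subset_of_card_le hs (by omega))
  obtain ⟨p, hpY, hpZ⟩ := Finset.not_subset.mp hns
  have hns' : ¬ Z ⊆ Y := fun hs => hne (Finset.eq_of_subset_of_card_le hs (by omega)).symm
  obtain ⟨q, hqZ, hqY⟩ := Finset.not_subset.mp hns'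
  have h1 : ∀ (i : Fin 3) (a : Fin 3 → Fin n),
      (∃ y ∈ Y, ∀ j, j ≠ i → y j = a j) → (∃ z ∈ Z, ∀ j, j ≠ i → z j = a j) :=
    fun i a => (h i a).mp
  have h2 : ∀ (i : Fin 3) (a : Fin 3 → Fin n),
      (∃ z ∈ Z, ∀ j, j ≠ i → z j = a j) → (∃ y ∈ Y, ∀ j, j ≠ i → y j = a j) :=
    fun i a => (h i a).mpr
  -- q agrees with p off some coordinate i
  obtain ⟨i, hi⟩ := gridLines_key Y Z hY hZ h1 p hpY hpZ q hqZ
  have hqp : q ≠ p := fun e => hqY (e ▸ hpY)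
  have hqpi : q i ≠ p i := by
    intro hqi
    apply hqp
    funext l
    rcases ne_or_eq l i with hl | rfl
    · exact hi l hl
    · exact hqi
  -- pick j ≠ i and k distinct from both
  have hj' : ∀ i : Fin 3, ∃ j : Fin 3, j ≠ i := by decide
  obtain ⟨j, hj⟩ := hj' i
  have hk' : ∀ i j : Fin 3, i ≠ j → ∃ k : Fin 3, k ≠ i ∧ k ≠ j := by decide
  obtain ⟨k, hki, hkj⟩ := hk' i j (Ne.symm hj)
  -- z ∈ Z agreeing with p off j
  obtain ⟨z, hzZ, hz⟩ := h1 j p ⟨p, hpY, fun _ _ => rfl⟩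
  have hzj : z j ≠ p j := by
    intro hzjp
    apply hpZ
    have : z = p := by
      funext l
      rcases ne_or_eq l j with hl | rfl
      · exact hz l hl
      · exact hzjp
    rwa [← this]
  -- y ∈ Y agreeing with z off k
  obtain ⟨y, hyY, hy⟩ := h2 k z ⟨z, hzZ, fun _ _ => rfl⟩
  -- y agrees with q off some coordinate m
  obtain ⟨m, hm⟩ := gridLines_key Z Y hZ hY h2 q hqZ hqY y hyY
  have hyi : y i = p i := by rw [hy i (Ne.symm hki)]; exact hz i (Ne.symm hj)
  have hyj : y j = z j := hy j (Ne.symm hkj)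
  have hmi : m = i := by
    by_contra hmi
    have : y i = q i := hm i (fun e => hmi e.symm)
    exact hqpi (by rw [← this, hyi])
  have : y j = q j := hm j (hmi ▸ hj)
  rw [hyj, hi j hj] at this
  exact hzj this
end

section
/- Fix k ≥ 1, t ≥ 1, m > k, and set ℓ = (k−1)t + 1. For i ∈ [ℓ] let c_i = (1, i−1, (i−1)^2, …, (i−1)^{k−1}) ∈ ℝ^k, and for j ∈ ℕ let H_{i,j} = {x ∈ ℝ^k : c_i · x = j}. Let S = {H_{i,j} : i ∈ [ℓ], j ∈ [ℓ^k m]}. Then the set system ([m]^k, S) is t-disjunct. -/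
/-- The grid `[m]^k` together with the hyperplanes `H_{i,j} = {x : c_i · x = j}` for
`i ∈ [ℓ]`, `j ∈ [ℓ^k m]`, where `ℓ = (k-1)t + 1` and `c_i = (1, i-1, …, (i-1)^{k-1})`,
is `t`-disjunct.  Here `i : Fin ℓ` plays the role of `i - 1`, so the dot product is
`∑ r, i^r * x r`. -/
theorem hyperplanes_on_grid_disjunct (k t m : ℕ) (hk : 1 ≤ k) (ht : 1 ≤ t) (hm : k < m) :
    ¬ ∃ (x : Fin k → ℕ) (Y : Finset (Fin k → ℕ)),
      (∀ r, x r ∈ Finset.Icc 1 m) ∧ (∀ y ∈ Y, ∀ r, y r ∈ Finset.Icc 1 m) ∧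
      Y.card = t ∧ x ∉ Y ∧
      ∀ (i : Fin ((k - 1) * t + 1)) (j : ℕ), j ∈ Finset.Icc 1 (((k - 1) * t + 1) ^ k * m) →
        (∑ r : Fin k, (i : ℕ) ^ (r : ℕ) * x r) = j →
        ∃ y ∈ Y, (∑ r : Fin k, (i : ℕ) ^ (r : ℕ) * y r) = j := by
  classical
  set L := (k - 1) * t + 1 with hL
  rintro ⟨x, Y, hx, hY, hcard, hxY, hcov⟩
  have hkL : k ≤ L := by
    have : k - 1 ≤ (k - 1) * t := Nat.le_mul_of_pos_right _ ht
    omega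
  -- for each i, the value j_i is in range
  have hj : ∀ i : Fin L, ∃ y ∈ Y,
      (∑ r : Fin k, (i : ℕ) ^ (r : ℕ) * y r) = ∑ r : Fin k, (i : ℕ) ^ (r : ℕ) * x r := by
    intro i
    apply hcov i _ _ rfl
    rw [Finset.mem_Icc]
    constructor
    · have h0 : (1 : ℕ) ≤ (i : ℕ) ^ ((⟨0, hk⟩ : Fin k) : ℕ) * x ⟨0, hk⟩ := by
        have := (Finset.mem_Icc.mp (hx ⟨0, hk⟩)).1
        simpa using this
      exact le_trans h0 (Finset.single_le_sum
        (f := fun r : Fin k => (i : ℕ) ^ (r : ℕ) * x r)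
        (fun r _ => Nat.zero_le _) (Finset.mem_univ _))
    · have hterm : ∀ r : Fin k, (i : ℕ) ^ (r : ℕ) * x r ≤ L ^ (k - 1) * m := by
        intro r
        apply Nat.mul_le_mul
        · calc (i : ℕ) ^ (r : ℕ) ≤ L ^ (r : ℕ) := Nat.pow_le_pow_left (le_of_lt i.isLt) _
            _ ≤ L ^ (k - 1) := Nat.pow_le_pow_right (Nat.succ_le_iff.mp (by omega)) (by omega)
        · exact (Finset.mem_Icc.mp (hx r)).2
      calc (∑ r : Fin k, (i : ℕ) ^ (r : ℕ) * x r) ≤ ∑ _r : Fin k, L ^ (k - 1) * m :=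
            Finset.sum_le_sum fun r _ => hterm r
        _ = k * (L ^ (k - 1) * m) := by simp [mul_comm]
        _ ≤ L * (L ^ (k - 1) * m) := Nat.mul_le_mul_right _ hkL
        _ = L ^ k * m := by
            rw [← mul_assoc, ← pow_succ']
            congr 2
            omega
  choose g hgY hgeq using hj
  -- pigeonhole: some y is chosen for at least k values of i
  have hpigeon : ∃ y ∈ Y, k - 1 < (Finset.univ.filter fun i : Fin L => g i = y).card := by
    apply Finset.exists_lt_card_fiber_of_mul_lt_card_of_maps_to
    · intro i _; exact hgY i
    · rw [hcard]
      simp only [Finset.card_univ, Fintype.card_fin]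
      calc t * (k - 1) = (k - 1) * t := mul_comm _ _
        _ < L := by omega
  obtain ⟨y, hyY, hfib⟩ := hpigeon
  set F := Finset.univ.filter fun i : Fin L => g i = y with hF
  have hkF : k ≤ F.card := by omega
  -- Vandermonde / polynomial argument
  set p : Polynomial ℤ := ∑ r : Fin k, Polynomial.monomial (r : ℕ) ((x r : ℤ) - (y r : ℤ))
    with hp
  have heval : ∀ j ∈ F.image (fun i : Fin L => (i : ℤ)), p.eval j = 0 := by
    intro j hj
    obtain ⟨i, hi, rfl⟩ := Finset.mem_image.mp hj
    have hgi : g i = y := (Finset.mem_filter.mp hi).2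
    have h1 : (∑ r : Fin k, (i : ℕ) ^ (r : ℕ) * y r) = ∑ r : Fin k, (i : ℕ) ^ (r : ℕ) * x r := by
      rw [← hgi]; exact hgeq i
    have h2 : (∑ r : Fin k, ((i : ℕ) : ℤ) ^ (r : ℕ) * (y r : ℤ))
        = ∑ r : Fin k, ((i : ℕ) : ℤ) ^ (r : ℕ) * (x r : ℤ) := by
      exact_mod_cast h1
    simp only [hp, Polynomial.eval_finset_sum, Polynomial.eval_monomial]
    rw [Finset.sum_congr rfl (fun r _ => by ring :
      ∀ r ∈ Finset.univ, ((x r : ℤ) - (y r : ℤ)) * ((i : ℕ) : ℤ) ^ (r : ℕ)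
        = ((i : ℕ) : ℤ) ^ (r : ℕ) * (x r : ℤ) - ((i : ℕ) : ℤ) ^ (r : ℕ) * (y r : ℤ))]
    rw [Finset.sum_sub_distrib, h2, sub_self]
  have hdeg : p.natDegree < (F.image (fun i : Fin L => (i : ℤ))).card := by
    have hinj : (F.image (fun i : Fin L => (i : ℤ))).card = F.card := by
      apply Finset.card_image_of_injective
      intro a b hab
      simp only at hab
      apply Fin.ext
      exact_mod_cast hab
    rw [hinj]
    have : p.natDegree ≤ k - 1 := by
      apply Polynomial.natDegree_sum_le_of_forall_le
      intro r _
      calc (Polynomial.monomial (r : ℕ) ((x r : ℤ) - (y r : ℤ))).natDegree ≤ (r : ℕ) :=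
            Polynomial.natDegree_monomial_le _
        _ ≤ k - 1 := by omega
    omega
  have hp0 : p = 0 := Polynomial.eq_zero_of_natDegree_lt_card_of_eval_eq_zero' p _ heval hdeg
  have hxy : x = y := by
    funext r
    have hc : p.coeff (r : ℕ) = (x r : ℤ) - (y r : ℤ) := by
      rw [hp, Polynomial.finset_sum_coeff]
      rw [Finset.sum_eq_single r]
      · simp [Polynomial.coeff_monomial]
      · intro b _ hbr
        rw [Polynomial.coeff_monomial]
        rw [if_neg (by simpa [Fin.val_eq_val] using hbr)]
      · simp
    rw [hp0] at hc
    simp at hc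
    exact_mod_cast sub_eq_zero.mp hc.symm
  exact hxY (hxy ▸ hyY)
end

section
/- Let P ⊆ [n]^d be a set of grid points containing no d-star, i.e., no d+1 points x, x_1, …, x_d where each x_i differs from x in only the i-th coordinate. Then |P| ≤ d · n^{d−1}. -/
/-- If `P ⊆ [n]^d` contains no `d`-star (a point `x` together with `d` points `x_i`,
where `x_i` differs from `x` exactly in the `i`-th coordinate), then
`|P| ≤ d * n^(d-1)`. -/
theorem star_free_card_le (d n : ℕ) (P : Finset (Fin d → Fin n))
    (h : ¬ ∃ x ∈ P, ∃ f : Fin d → (Fin d → Fin n),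
      ∀ i : Fin d, f i ∈ P ∧ f i ≠ x ∧ ∀ j, j ≠ i → f i j = x j) :
    P.card ≤ d * n ^ (d - 1) := by
  have claim : ∀ x ∈ P, ∃ i : Fin d, ∀ y ∈ P, (∀ j, j ≠ i → y j = x j) → y = x := by
    by_contra hcl
    push_neg at hcl
    obtain ⟨x, hx, hx2⟩ := hcl
    choose f hf1 hf2 hf3 using hx2
    exact h ⟨x, hx, f, fun i => ⟨hf1 i, hf3 i, hf2 i⟩⟩
  choose i hi using claim
  have key : P.attach.card ≤ Fintype.card (Σ k : Fin d, ({j : Fin d // j ≠ k} → Fin n)) := by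
    rw [← Finset.card_univ]
    apply Finset.card_le_card_of_injOn
      (fun x => (⟨i x.1 x.2, fun j => x.1 j.1⟩ : Σ k : Fin d, ({j : Fin d // j ≠ k} → Fin n)))
      (fun _ _ => Finset.mem_univ _)
    rintro ⟨x, hx⟩ - ⟨y, hy⟩ - hxy
    simp only at hxy
    obtain ⟨h1, h2⟩ := Sigma.mk.inj_iff.mp hxy
    refine Subtype.ext ((hi x hx y hy ?_).symm)
    revert h2
    generalize i x hx = a at h1 ⊢
    subst h1
    intro h2 j hj
    exact (congr_fun (eq_of_heq h2) ⟨j, hj⟩).symm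
  have hcard : Fintype.card (Σ k : Fin d, ({j : Fin d // j ≠ k} → Fin n)) = d * n ^ (d - 1) := by
    have hsub : ∀ k : Fin d, Fintype.card {j : Fin d // j ≠ k} = d - 1 := fun k => by
      simp [Fintype.card_subtype_compl]
    simp [Fintype.card_sigma, Fintype.card_fun, hsub, Finset.sum_const, mul_comm]
  calc P.card = P.attach.card := (Finset.card_attach).symm
    _ ≤ _ := key
    _ = d * n ^ (d - 1) := hcard
end

section
/- Let P ⊆ [n]^2 be a set of points containing no four points forming the corners of an axis-parallel rectangle (i.e., no two distinct rows and two distinct columns all four of whose intersections lie in P). Then |P| ≤ n^{3/2} + n. -/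
/-!
Double count pairs of distinct points lying in a common row. Rectangle-freeness says that such
a pair is determined by its two columns, so there are at most `q²` of them for `q` columns;
on the other hand there are `∑ dᵣ² - |P|` of them, where `dᵣ` is the number of points in row
`r`. Cauchy–Schwarz over the `p` rows turns `∑ dᵣ² ≤ q² + |P|` into `|P|² ≤ p (q² + |P|)`,
which forces `|P| ≤ √p q + p`.
-/

open Finset

variable {α β : Type*}

def IsRectangleFree (P : Finset (α × β)) : Prop :=
  ¬ ∃ r₁ r₂ c₁ c₂, r₁ ≠ r₂ ∧ c₁ ≠ c₂ ∧
    (r₁, c₁) ∈ P ∧ (r₁, c₂) ∈ P ∧ (r₂, c₁) ∈ P ∧ (r₂, c₂) ∈ P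

section Counting

variable [DecidableEq α] (P : Finset (α × β))

def row (r : α) : Finset (α × β) := P.filter (·.1 = r)

def sameRowPairs [DecidableEq β] : Finset ((α × β) × (α × β)) :=
  P.offDiag.filter fun x => x.1.1 = x.2.1

theorem sum_card_row [Fintype α] : ∑ r, #(row P r) = #P :=
  (card_eq_sum_card_fiberwise fun _ _ => mem_univ _).symm

theorem card_sameRowPairs [Fintype α] [DecidableEq β] :
    #(sameRowPairs P) = ∑ r, #(row P r).offDiag := by
  rw [card_eq_sum_card_fiberwise (f := fun x => x.1.1) fun _ _ => mem_univ _]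
  refine sum_congr rfl fun r _ => congrArg card ?_
  ext ⟨x, y⟩
  simp only [sameRowPairs, row, mem_filter, mem_offDiag]
  grind

theorem IsRectangleFree.card_sameRowPairs_le [DecidableEq β] [Fintype β] {P : Finset (α × β)}
    (hP : IsRectangleFree P) : #(sameRowPairs P) ≤ Fintype.card β ^ 2 := by
  rw [sq, ← Fintype.card_prod, ← card_univ]
  refine card_le_card_of_injOn (fun x => (x.1.2, x.2.2)) (fun _ _ => mem_univ _) ?_
  rintro ⟨⟨r, c⟩, ⟨r₁, c'⟩⟩ hx ⟨⟨r', d⟩, ⟨r₂, d'⟩⟩ hy hxy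
  simp only [coe_filter, sameRowPairs, mem_offDiag, Set.mem_ofPred_eq] at hx hy
  simp only [Prod.mk.injEq] at hxy ⊢
  obtain ⟨⟨hrc, hrc', hne⟩, rfl⟩ := hx
  obtain ⟨⟨hrd, hrd', -⟩, rfl⟩ := hy
  obtain ⟨rfl, rfl⟩ := hxy
  suffices r = r' by simp [this]
  by_contra hrr'
  exact hP ⟨r, r', c, c', hrr', fun h => hne (by rw [h]), hrc, hrc', hrd, hrd'⟩

theorem IsRectangleFree.sum_card_row_sq_le [Fintype α] [DecidableEq β] [Fintype β]
    {P : Finset (α × β)} (hP : IsRectangleFree P) :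
    ∑ r, #(row P r) ^ 2 ≤ Fintype.card β ^ 2 + #P := by
  have hsq (s : Finset (α × β)) : #s ^ 2 = #s.offDiag + #s := by
    rw [offDiag_card, Nat.sub_add_cancel (Nat.le_mul_self _), sq]
  calc ∑ r, #(row P r) ^ 2 = #(sameRowPairs P) + #P := by
        simp only [hsq, sum_add_distrib, card_sameRowPairs, sum_card_row]
    _ ≤ Fintype.card β ^ 2 + #P := by gcongr; exact hP.card_sameRowPairs_le

theorem IsRectangleFree.card_sq_le [Fintype α] [DecidableEq β] [Fintype β] {P : Finset (α × β)}
    (hP : IsRectangleFree P) : #P ^ 2 ≤ Fintype.card α * (Fintype.card β ^ 2 + #P) :=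
  calc #P ^ 2 = (∑ r, #(row P r)) ^ 2 := by rw [sum_card_row]
    _ ≤ Fintype.card α * ∑ r, #(row P r) ^ 2 := sq_sum_le_card_mul_sum_sq
    _ ≤ Fintype.card α * (Fintype.card β ^ 2 + #P) := by gcongr; exact hP.sum_card_row_sq_le

end Counting

theorem le_sqrt_mul_add_of_sq_le {x a b : ℝ} (ha : 0 ≤ a) (hb : 0 ≤ b)
    (h : x ^ 2 ≤ a * (b ^ 2 + x)) : x ≤ √a * b + a := by
  by_contra! hx
  have hs : 0 ≤ √a * b := by positivity
  nlinarith [Real.sq_sqrt ha]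

theorem IsRectangleFree.card_le [Fintype α] [Fintype β] {P : Finset (α × β)}
    (hP : IsRectangleFree P) :
    (#P : ℝ) ≤ √(Fintype.card α) * Fintype.card β + Fintype.card α := by
  classical
  refine le_sqrt_mul_add_of_sq_le (Nat.cast_nonneg _) (Nat.cast_nonneg _) ?_
  exact_mod_cast hP.card_sq_le

/-- Kővári–Sós–Turán: a subset of the grid `[n]^2` containing no four corners of an
axis-parallel rectangle has at most `n^(3/2) + n` points. -/
theorem rect_free_card_le (n : ℕ) (P : Finset (Fin n × Fin n))
    (h : ¬ ∃ r₁ r₂ c₁ c₂ : Fin n, r₁ ≠ r₂ ∧ c₁ ≠ c₂ ∧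
      (r₁, c₁) ∈ P ∧ (r₁, c₂) ∈ P ∧ (r₂, c₁) ∈ P ∧ (r₂, c₂) ∈ P) :
    (P.card : ℝ) ≤ (n : ℝ) ^ ((3 : ℝ) / 2) + n := by
  have hpow : (n : ℝ) ^ ((3 : ℝ) / 2) = √n * n := by
    rw [show (3 : ℝ) / 2 = 1 / 2 + 1 by norm_num, Real.rpow_add' (Nat.cast_nonneg _) (by norm_num),
      Real.rpow_one, Real.sqrt_eq_rpow]
  have hP : IsRectangleFree P := h
  simpa [hpow] using hP.card_le
end

section
/- For every k ≥ 1 with n = k^3, and every V ⊆ [n]^2 with |V| ≤ n, there exists a finite family Q of axis-parallel rectangles with integer corners covering all points of [n]^2, such that no rectangle of Q contains a point of V in its interior, and the sum over Q ∈ Q of z(Q) is at most 4·n^{5/3}, where z(Q) is the maximum number of integer points that fit in Q without four of them forming the corners of an axis-parallel rectangle. -/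
/-- `F` contains no four corners of an axis-parallel rectangle. -/
def RectFree (F : Finset (ℤ × ℤ)) : Prop :=
  ¬ ∃ r₁ r₂ c₁ c₂ : ℤ, r₁ ≠ r₂ ∧ c₁ ≠ c₂ ∧
    (r₁, c₁) ∈ F ∧ (r₁, c₂) ∈ F ∧ (r₂, c₁) ∈ F ∧ (r₂, c₂) ∈ F

/-- The point `p` lies in the (closed) rectangle `R`, encoded as a pair of opposite
corners `R = ((a₁, a₂), (b₁, b₂))`. -/
def MemRect (p : ℤ × ℤ) (R : (ℤ × ℤ) × (ℤ × ℤ)) : Prop :=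
  R.1.1 ≤ p.1 ∧ p.1 ≤ R.2.1 ∧ R.1.2 ≤ p.2 ∧ p.2 ≤ R.2.2

/-- `zWeight R` is the maximum number of integer points that fit in the rectangle `R`
without four of them forming the corners of an axis-parallel rectangle. -/
noncomputable def zWeight (R : (ℤ × ℤ) × (ℤ × ℤ)) : ℕ :=
  sSup {m : ℕ | ∃ F : Finset (ℤ × ℤ), (∀ p ∈ F, MemRect p R) ∧ RectFree F ∧ F.card = m}

/-!
Cut `[n]²`, `n = k³`, into the `n` blocks `(i k, (i + 1) k] × (j k², (j + 1) k²]`, and cut each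
block along the second coordinate through every point of `V` in its interior. A block with `m`
points of `V` in its interior falls into at most `m + 1` pieces, so there are at most `2n` pieces.
A rectangle with `p` rows and `q` columns has `z ≤ q + p²`, and every piece has `k` rows and at
most `k²` columns, so the total weight is at most `2n · 2k² = 4k⁵`.
-/

open Finset

/-- Fix one point of `F` in every occupied column. Any other point `(r, c)` is determined by `r`
and the row of the fixed point of column `c`: two such points sharing both would span a rectangle
with the two fixed points. -/
theorem RectFree.card_le {F : Finset (ℤ × ℤ)} (hF : RectFree F) {s t : Finset ℤ}
    (hst : F ⊆ s ×ˢ t) : #F ≤ #t + #s ^ 2 := by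
  classical
  have hcol : ∀ c ∈ F.image Prod.snd, ∃ r, (r, c) ∈ F := by
    simp only [mem_image]
    rintro c ⟨p, hp, rfl⟩
    exact ⟨p.1, hp⟩
  choose! m hm using hcol
  have hmF : ∀ p ∈ F, (m p.2, p.2) ∈ F := fun p hp => hm _ (mem_image_of_mem _ hp)
  have hfixed : #{p ∈ F | p.1 = m p.2} ≤ #t := by
    refine card_le_card_of_injOn Prod.snd
      (fun p hp => (mem_product.1 (hst (mem_filter.1 hp).1)).2) ?_
    intro p hp q hq hpq
    simp only [coe_filter, Set.mem_ofPred_eq] at hp hq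
    exact Prod.ext (by rw [hp.2, hq.2, hpq]) hpq
  have hrest : #{p ∈ F | ¬p.1 = m p.2} ≤ #(s ×ˢ s) := by
    refine card_le_card_of_injOn (fun p => (m p.2, p.1))
      (fun p hp => mem_product.2 ⟨(mem_product.1 (hst (hmF p (mem_filter.1 hp).1))).1,
        (mem_product.1 (hst (mem_filter.1 hp).1)).1⟩) ?_
    simp only [coe_filter]
    rintro ⟨r, c⟩ ⟨hp, hpm⟩ ⟨r', c'⟩ ⟨hq, -⟩ hpq
    obtain ⟨hm_eq, rfl⟩ := Prod.ext_iff.1 hpq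
    simp only at hm_eq hpm ⊢
    by_contra hne
    exact hF ⟨m c, r, c, c', Ne.symm hpm, fun h => hne (by rw [h]), hmF _ hp,
      hm_eq ▸ hmF _ hq, hp, hq⟩
  rw [card_product, ← sq] at hrest
  rw [← card_filter_add_card_filter_not (fun p : ℤ × ℤ => p.1 = m p.2)]
  exact add_le_add hfixed hrest

theorem zWeight_le (R : (ℤ × ℤ) × (ℤ × ℤ)) :
    zWeight R ≤ #(Icc R.1.2 R.2.2) + #(Icc R.1.1 R.2.1) ^ 2 :=
  csSup_le' <| by
    rintro _ ⟨F, hF, hfree, rfl⟩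
    exact hfree.card_le fun p hp => by
      obtain ⟨h₁, h₂, h₃, h₄⟩ := hF p hp
      exact mem_product.2 ⟨mem_Icc.2 ⟨h₁, h₂⟩, mem_Icc.2 ⟨h₃, h₄⟩⟩

theorem Finset.sum_biUnion_le {ι α M : Type*} [DecidableEq α] [AddCommMonoid M] [PartialOrder M]
    [CanonicallyOrderedAdd M] [IsOrderedAddMonoid M] (s : Finset ι) (t : ι → Finset α) (f : α → M) :
    ∑ x ∈ s.biUnion t, f x ≤ ∑ i ∈ s, ∑ x ∈ t i, f x := by
  have : s.biUnion t = (s.sigma t).image Sigma.snd := by ext; simp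
  rw [this]
  exact (sum_image_le_of_nonneg fun _ _ => zero_le).trans (sum_sigma s t (f ∘ Sigma.snd)).le

def consecutivePairs (C : Finset ℤ) : Finset (ℤ × ℤ) :=
  {c ∈ C ×ˢ C | c.1 < c.2 ∧ ∀ x ∈ C, ¬(c.1 < x ∧ x < c.2)}

theorem card_consecutivePairs_le (C : Finset ℤ) : #(consecutivePairs C) ≤ #C - 1 := by
  rcases C.eq_empty_or_nonempty with rfl | hC
  · simp [consecutivePairs]
  rw [← card_erase_of_mem (C.max'_mem hC)]
  simp only [consecutivePairs]
  refine card_le_card_of_injOn Prod.fst (fun c hc => ?_) (fun c hc d hd hcd => ?_)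
  · obtain ⟨hcC, hlt, -⟩ := mem_filter.1 hc
    exact mem_erase.2 ⟨(hlt.trans_le (C.le_max' _ (mem_product.1 hcC).2)).ne,
      (mem_product.1 hcC).1⟩
  · simp only [coe_filter, mem_product] at hc hd
    obtain ⟨⟨-, hc₂⟩, hc, hcgap⟩ := hc
    obtain ⟨⟨-, hd₂⟩, hd, hdgap⟩ := hd
    refine Prod.ext hcd (le_antisymm ?_ ?_) <;> by_contra! h
    · exact hcgap _ hd₂ ⟨hcd ▸ hd, h⟩
    · exact hdgap _ hc₂ ⟨hcd ▸ hc, h⟩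

theorem exists_mem_consecutivePairs {C : Finset ℤ} {lo hi y : ℤ} (hlo : lo ∈ C) (hhi : hi ∈ C)
    (hloy : lo < y) (hyhi : y ≤ hi) : ∃ c ∈ consecutivePairs C, c.1 < y ∧ y ≤ c.2 := by
  have hbelow : ({x ∈ C | x < y}).Nonempty := ⟨lo, mem_filter.2 ⟨hlo, hloy⟩⟩
  have habove : ({x ∈ C | y ≤ x}).Nonempty := ⟨hi, mem_filter.2 ⟨hhi, hyhi⟩⟩
  obtain ⟨hc₁, hc₁y⟩ := mem_filter.1 (max'_mem _ hbelow)
  obtain ⟨hc₂, hc₂y⟩ := mem_filter.1 (min'_mem _ habove)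
  refine ⟨(_, _), mem_filter.2 ⟨mem_product.2 ⟨hc₁, hc₂⟩, hc₁y.trans_le hc₂y, ?_⟩, hc₁y, hc₂y⟩
  rintro x hx ⟨h₁, h₂⟩
  rcases lt_or_ge x y with hxy | hxy
  · exact (le_max' _ x (mem_filter.2 ⟨hx, hxy⟩)).not_gt h₁
  · exact (min'_le _ x (mem_filter.2 ⟨hx, hxy⟩)).not_gt h₂

def MemRectInterior (p : ℤ × ℤ) (R : (ℤ × ℤ) × (ℤ × ℤ)) : Prop :=
  R.1.1 < p.1 ∧ p.1 < R.2.1 ∧ R.1.2 < p.2 ∧ p.2 < R.2.2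

instance (p : ℤ × ℤ) (R : (ℤ × ℤ) × (ℤ × ℤ)) : Decidable (MemRectInterior p R) :=
  inferInstanceAs (Decidable (_ ∧ _ ∧ _ ∧ _))

theorem MemRectInterior.memRect {p : ℤ × ℤ} {R : (ℤ × ℤ) × (ℤ × ℤ)} (h : MemRectInterior p R) :
    MemRect p R :=
  ⟨h.1.le, h.2.1.le, h.2.2.1.le, h.2.2.2.le⟩

section Split

variable (V : Finset (ℤ × ℤ)) (R : (ℤ × ℤ) × (ℤ × ℤ))

/-- Consecutive levels `c₁ < c₂` bound the piece with columns `c₁ + 1, …, c₂` (see `splitRect`),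
hence the level `R.1.2 - 1` below the first column of `R`. -/
def cutLevels : Finset ℤ :=
  insert (R.1.2 - 1) (insert R.2.2 ({v ∈ V | MemRectInterior v R}.image Prod.snd))

def splitRect : Finset ((ℤ × ℤ) × (ℤ × ℤ)) :=
  (consecutivePairs (cutLevels V R)).image fun c => ((R.1.1, c.1 + 1), (R.2.1, c.2))

theorem card_splitRect_le : #(splitRect V R) ≤ #{v ∈ V | MemRectInterior v R} + 1 := by
  have hcuts : #(cutLevels V R) ≤
      #(insert R.2.2 ({v ∈ V | MemRectInterior v R}.image Prod.snd)) + 1 :=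
    card_insert_le _ _
  have htop := card_insert_le R.2.2 ({v ∈ V | MemRectInterior v R}.image Prod.snd)
  have himage := card_image_le (s := {v ∈ V | MemRectInterior v R}) (f := Prod.snd)
  have hpairs := card_consecutivePairs_le (cutLevels V R)
  have hsplit : #(splitRect V R) ≤ #(consecutivePairs (cutLevels V R)) := card_image_le
  omega

theorem exists_memRect_splitRect {p : ℤ × ℤ} (hp : MemRect p R) :
    ∃ P ∈ splitRect V R, MemRect p P := by
  obtain ⟨h₁, h₂, h₃, h₄⟩ := hp
  obtain ⟨c, hc, hc₁, hc₂⟩ := exists_mem_consecutivePairs (C := cutLevels V R)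
    (mem_insert_self _ _) (mem_insert_of_mem (mem_insert_self _ _)) (by omega : R.1.2 - 1 < p.2) h₄
  exact ⟨_, mem_image_of_mem _ hc, h₁, h₂, show c.1 + 1 ≤ p.2 by omega, hc₂⟩

variable {V R}

theorem cutLevels_subset_Icc (hR : R.1.2 ≤ R.2.2) : cutLevels V R ⊆ Icc (R.1.2 - 1) R.2.2 := by
  intro c hc
  simp only [cutLevels, mem_insert, mem_image, mem_filter] at hc
  rw [mem_Icc]
  rcases hc with rfl | rfl | ⟨v, ⟨-, -, -, hv₁, hv₂⟩, rfl⟩ <;> omega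

theorem not_memRectInterior_of_mem_splitRect (hR : R.1.2 ≤ R.2.2) {P : (ℤ × ℤ) × (ℤ × ℤ)}
    {v : ℤ × ℤ} (hP : P ∈ splitRect V R) (hv : v ∈ V) : ¬ MemRectInterior v P := by
  obtain ⟨c, hc, rfl⟩ := mem_image.1 hP
  obtain ⟨hc₁₂, -, hgap⟩ := mem_filter.1 hc
  have h₁ := mem_Icc.1 (cutLevels_subset_Icc hR (mem_product.1 hc₁₂).1)
  have h₂ := mem_Icc.1 (cutLevels_subset_Icc hR (mem_product.1 hc₁₂).2)
  rintro ⟨hx₁, hx₂, hy₁, hy₂⟩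
  simp only at hx₁ hx₂ hy₁ hy₂
  have hvR : MemRectInterior v R := ⟨hx₁, hx₂, by omega, by omega⟩
  exact hgap v.2 (mem_insert_of_mem (mem_insert_of_mem (mem_image_of_mem _
    (mem_filter.2 ⟨hv, hvR⟩)))) ⟨by omega, hy₂⟩

theorem zWeight_le_of_mem_splitRect (hR : R.1.2 ≤ R.2.2) {P : (ℤ × ℤ) × (ℤ × ℤ)}
    (hP : P ∈ splitRect V R) : zWeight P ≤ #(Icc R.1.2 R.2.2) + #(Icc R.1.1 R.2.1) ^ 2 := by
  obtain ⟨c, hc, rfl⟩ := mem_image.1 hP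
  obtain ⟨hc₁, -⟩ := mem_filter.1 hc
  have h₁ := mem_Icc.1 (cutLevels_subset_Icc hR (mem_product.1 hc₁).1)
  have h₂ := mem_Icc.1 (cutLevels_subset_Icc hR (mem_product.1 hc₁).2)
  refine (zWeight_le _).trans (Nat.add_le_add_right (card_le_card (Icc_subset_Icc ?_ ?_)) _) <;>
    simp only <;> omega

end Split

theorem sum_zWeight_splitRect_le (V : Finset (ℤ × ℤ)) {R : (ℤ × ℤ) × (ℤ × ℤ)}
    (hR : R.1.2 ≤ R.2.2) :
    ∑ P ∈ splitRect V R, zWeight P ≤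
      (#{v ∈ V | MemRectInterior v R} + 1) * (#(Icc R.1.2 R.2.2) + #(Icc R.1.1 R.2.1) ^ 2) :=
  (sum_le_card_nsmul _ _ _ fun _ hP => zWeight_le_of_mem_splitRect hR hP).trans <|
    Nat.mul_le_mul_right _ (card_splitRect_le V R)

def gridBlock (a b : ℕ) (ij : ℤ × ℤ) : (ℤ × ℤ) × (ℤ × ℤ) :=
  ((ij.1 * a + 1, ij.2 * b + 1), ((ij.1 + 1) * a, (ij.2 + 1) * b))

section Grid

variable {a b : ℕ}

theorem memRect_gridBlock {p ij : ℤ × ℤ} :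
    MemRect p (gridBlock a b ij) ↔
      ij.1 * a < p.1 ∧ p.1 ≤ (ij.1 + 1) * a ∧ ij.2 * b < p.2 ∧ p.2 ≤ (ij.2 + 1) * b := by
  simp only [MemRect, gridBlock, Int.add_one_le_iff]

theorem gridBlock_snd_le (hb : 0 < b) (ij : ℤ × ℤ) :
    (gridBlock a b ij).1.2 ≤ (gridBlock a b ij).2.2 := by
  simp only [gridBlock]
  nlinarith

theorem existsUnique_mul_lt_le_mul {a : ℤ} (ha : 0 < a) (x : ℤ) :
    ∃! i : ℤ, i * a < x ∧ x ≤ (i + 1) * a := by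
  convert existsUnique_sub_zsmul_mem_Ioc ha x 0 using 3 with i
  simp only [Set.mem_Ioc, smul_eq_mul, zero_add]
  constructor <;> rintro ⟨h₁, h₂⟩ <;> constructor <;> linarith

theorem eq_of_memRect_gridBlock (ha : 0 < a) (hb : 0 < b) {p ij ij' : ℤ × ℤ}
    (h : MemRect p (gridBlock a b ij)) (h' : MemRect p (gridBlock a b ij')) : ij = ij' := by
  rw [memRect_gridBlock] at h h'
  exact Prod.ext ((existsUnique_mul_lt_le_mul (by exact_mod_cast ha) p.1).unique
      ⟨h.1, h.2.1⟩ ⟨h'.1, h'.2.1⟩)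
    ((existsUnique_mul_lt_le_mul (by exact_mod_cast hb) p.2).unique
      ⟨h.2.2.1, h.2.2.2⟩ ⟨h'.2.2.1, h'.2.2.2⟩)

theorem exists_memRect_gridBlock (ha : 0 < a) (hb : 0 < b) {M N : ℕ} {p : ℤ × ℤ}
    (hp : 1 ≤ p.1 ∧ p.1 ≤ a * M ∧ 1 ≤ p.2 ∧ p.2 ≤ b * N) :
    ∃ ij ∈ Ico 0 (M : ℤ) ×ˢ Ico 0 (N : ℤ), MemRect p (gridBlock a b ij) := by
  obtain ⟨i, ⟨hi₁, hi₂⟩, -⟩ := existsUnique_mul_lt_le_mul (a := a) (by exact_mod_cast ha) p.1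
  obtain ⟨j, ⟨hj₁, hj₂⟩, -⟩ := existsUnique_mul_lt_le_mul (a := b) (by exact_mod_cast hb) p.2
  refine ⟨(i, j), mem_product.2 ⟨mem_Ico.2 ⟨?_, ?_⟩, mem_Ico.2 ⟨?_, ?_⟩⟩,
    memRect_gridBlock.2 ⟨hi₁, hi₂, hj₁, hj₂⟩⟩ <;> nlinarith

theorem sum_card_memRectInterior_gridBlock_le (ha : 0 < a) (hb : 0 < b) (I : Finset (ℤ × ℤ))
    (V : Finset (ℤ × ℤ)) : ∑ ij ∈ I, #{v ∈ V | MemRectInterior v (gridBlock a b ij)} ≤ #V := by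
  classical
  rw [← card_biUnion fun ij _ ij' _ hne => disjoint_filter.2 fun v _ h h' =>
    hne (eq_of_memRect_gridBlock ha hb h.memRect h'.memRect)]
  exact card_le_card (biUnion_subset.2 fun _ _ => filter_subset _ _)

theorem sum_zWeight_splitRect_gridBlock_le (hb : 0 < b) (V : Finset (ℤ × ℤ)) (ij : ℤ × ℤ) :
    ∑ P ∈ splitRect V (gridBlock a b ij), zWeight P ≤
      (#{v ∈ V | MemRectInterior v (gridBlock a b ij)} + 1) * (b + a ^ 2) := by
  have hrows : #(Icc (gridBlock a b ij).1.1 (gridBlock a b ij).2.1) = a := by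
    simp [gridBlock, Int.card_Icc, add_mul]
  have hcols : #(Icc (gridBlock a b ij).1.2 (gridBlock a b ij).2.2) = b := by
    simp [gridBlock, Int.card_Icc, add_mul]
  simpa only [hrows, hcols] using sum_zWeight_splitRect_le V (gridBlock_snd_le (a := a) hb ij)

end Grid

theorem rect_cover_exists_general (k : ℕ) (hk : 1 ≤ k) (V : Finset (ℤ × ℤ))
    (hVcard : V.card ≤ k ^ 3) :
    ∃ Q : Finset ((ℤ × ℤ) × (ℤ × ℤ)),
      (∀ p : ℤ × ℤ, (1 ≤ p.1 ∧ p.1 ≤ (k ^ 3 : ℤ) ∧ 1 ≤ p.2 ∧ p.2 ≤ (k ^ 3 : ℤ)) →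
        ∃ R ∈ Q, MemRect p R) ∧
      (∀ R ∈ Q, ∀ v ∈ V,
        ¬ (R.1.1 < v.1 ∧ v.1 < R.2.1 ∧ R.1.2 < v.2 ∧ v.2 < R.2.2)) ∧
      (∑ R ∈ Q, zWeight R) ≤ 4 * k ^ 5 := by
  classical
  have hk₀ : 0 < k := hk
  have hk₂ : 0 < k ^ 2 := by positivity
  set I := Ico 0 ((k ^ 2 : ℕ) : ℤ) ×ˢ Ico 0 (k : ℤ)
  have hI : #I = k ^ 3 := by
    simp only [I, card_product, Int.card_Ico, sub_zero, Int.toNat_natCast]; ring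
  refine ⟨I.biUnion fun ij => splitRect V (gridBlock k (k ^ 2) ij), fun p hp => ?_,
    fun R hR v hv => ?_, ?_⟩
  · obtain ⟨ij, hij, hp⟩ := exists_memRect_gridBlock hk₀ hk₂ (M := k ^ 2) (N := k)
      (p := p) (by push_cast; ring_nf; exact hp)
    obtain ⟨R, hR, hpR⟩ := exists_memRect_splitRect V _ hp
    exact ⟨R, mem_biUnion.2 ⟨ij, hij, hR⟩, hpR⟩
  · obtain ⟨ij, -, hR⟩ := mem_biUnion.1 hR
    exact not_memRectInterior_of_mem_splitRect (gridBlock_snd_le hk₂ ij) hR hv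
  calc ∑ R ∈ I.biUnion fun ij => splitRect V (gridBlock k (k ^ 2) ij), zWeight R
      ≤ ∑ ij ∈ I, (#{v ∈ V | MemRectInterior v (gridBlock k (k ^ 2) ij)} + 1) * (k ^ 2 + k ^ 2) :=
        (sum_biUnion_le _ _ _).trans <|
          sum_le_sum fun ij _ => sum_zWeight_splitRect_gridBlock_le hk₂ V ij
    _ = (∑ ij ∈ I, #{v ∈ V | MemRectInterior v (gridBlock k (k ^ 2) ij)} + #I) * (2 * k ^ 2) := by
        rw [← sum_mul, sum_add_distrib, sum_const, smul_eq_mul, mul_one, two_mul]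
    _ ≤ (k ^ 3 + k ^ 3) * (2 * k ^ 2) := by
        gcongr
        · exact (sum_card_memRectInterior_gridBlock_le hk₀ hk₂ I V).trans hVcard
        · exact hI.le
    _ = 4 * k ^ 5 := by ring

/-- For `n = k^3` and any `V ⊆ [n]^2` with `|V| ≤ n`, there is a family `Q` of
axis-parallel rectangles with integer corners covering all points of `[n]^2`, no
rectangle of which contains a point of `V` in its interior, with total weight
`∑_{R ∈ Q} z(R) ≤ 4 n^(5/3) = 4 k^5`. -/
theorem rect_cover_exists (k : ℕ) (hk : 1 ≤ k) (V : Finset (ℤ × ℤ))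
    (hV : ∀ v ∈ V, 1 ≤ v.1 ∧ v.1 ≤ (k ^ 3 : ℤ) ∧ 1 ≤ v.2 ∧ v.2 ≤ (k ^ 3 : ℤ))
    (hVcard : V.card ≤ k ^ 3) :
    ∃ Q : Finset ((ℤ × ℤ) × (ℤ × ℤ)),
      (∀ p : ℤ × ℤ, (1 ≤ p.1 ∧ p.1 ≤ (k ^ 3 : ℤ) ∧ 1 ≤ p.2 ∧ p.2 ≤ (k ^ 3 : ℤ)) →
        ∃ R ∈ Q, MemRect p R) ∧
      (∀ R ∈ Q, ∀ v ∈ V,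
        ¬ (R.1.1 < v.1 ∧ v.1 < R.2.1 ∧ R.1.2 < v.2 ∧ v.2 < R.2.2)) ∧
      (∑ R ∈ Q, zWeight R) ≤ 4 * k ^ 5 :=
  rect_cover_exists_general k hk V hVcard
end

section
/- Let T = {x, x_1, …, x_d} ⊆ P ⊆ ℝ^d be a d-star with center x (each x_i differing from x only in coordinate i), and let S be a family of axis-parallel boxes such that the induced set system (P, S) is d-disjunct and all points of P and box corners are in general position. Then there is a box in S that contains x and none of x_1, …, x_d, and consequently some corner of a box of S lies in the interior of the smallest axis-parallel box containing T. -/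
/-- Let `T = {x, xs 0, …, xs (d-1)} ⊆ P` be a `d`-star with center `x` (each `xs i`
differing from `x` exactly in coordinate `i`), and let `S` be a family of axis-parallel
boxes such that `(P, S)` is `d`-disjunct and in general position (no point of `P` shares
a coordinate with a box boundary).  Then some box of `S` contains `x` and none of the
`xs i`, and consequently some corner of a box of `S` lies in the interior of the
smallest axis-parallel box containing `T`. -/
theorem star_stabbed (d : ℕ) (P : Finset (Fin d → ℝ))
    (S : Finset ((Fin d → ℝ) × (Fin d → ℝ)))
    (x : Fin d → ℝ) (xs : Fin d → (Fin d → ℝ))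
    (hx : x ∈ P) (hxs : ∀ i, xs i ∈ P)
    (hstar : ∀ i : Fin d, xs i i ≠ x i ∧ ∀ j, j ≠ i → xs i j = x j)
    (hdisj : ∀ p ∈ P, ∀ Y ⊆ P, Y.card = d → p ∉ Y →
      ∃ B ∈ S, (∀ i, B.1 i ≤ p i ∧ p i ≤ B.2 i) ∧
        ∀ y ∈ Y, ¬ (∀ i, B.1 i ≤ y i ∧ y i ≤ B.2 i))
    (hgen : ∀ i : Fin d, ∀ p ∈ P, ∀ B ∈ S, p i ≠ B.1 i ∧ p i ≠ B.2 i) :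
    (∃ B ∈ S, (∀ i, B.1 i ≤ x i ∧ x i ≤ B.2 i) ∧
      ∀ i : Fin d, ¬ (∀ j, B.1 j ≤ xs i j ∧ xs i j ≤ B.2 j)) ∧
    (∃ B ∈ S, ∃ c : Fin d → ℝ, (∀ i, c i = B.1 i ∨ c i = B.2 i) ∧
      ∀ i : Fin d, min (x i) (xs i i) < c i ∧ c i < max (x i) (xs i i)) := by
  have hinj : Function.Injective xs := by
    intro i j hij
    by_contra hne
    have h1 := (hstar j).1
    have h2 := (hstar i).2 j (fun h => hne h.symm)
    rw [hij] at h2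
    exact h1 h2
  set Y : Finset (Fin d → ℝ) := Finset.image xs Finset.univ with hY
  have hYsub : Y ⊆ P := by
    intro y hy
    simp only [hY, Finset.mem_image] at hy
    obtain ⟨i, _, rfl⟩ := hy
    exact hxs i
  have hYcard : Y.card = d := by
    rw [hY, Finset.card_image_of_injective _ hinj, Finset.card_univ, Fintype.card_fin]
  have hxY : x ∉ Y := by
    simp only [hY, Finset.mem_image]
    rintro ⟨i, _, h⟩
    exact (hstar i).1 (by rw [h])
  obtain ⟨B, hBS, hBx, hBY⟩ := hdisj x hx Y hYsub hYcard hxY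
  have hmain : ∀ i : Fin d, ¬ (∀ j, B.1 j ≤ xs i j ∧ xs i j ≤ B.2 j) := fun i =>
    hBY (xs i) (Finset.mem_image.mpr ⟨i, Finset.mem_univ i, rfl⟩)
  refine ⟨⟨B, hBS, hBx, hmain⟩, B, hBS, fun i => if xs i i < x i then B.1 i else B.2 i,
    fun i => by dsimp only; split <;> simp, fun i => ?_⟩
  have hfail : ¬ (B.1 i ≤ xs i i ∧ xs i i ≤ B.2 i) := by
    intro h
    apply hmain i
    intro j
    by_cases hji : j = i
    · subst hji; exact h
    · rw [(hstar i).2 j hji]; exact hBx j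
  have hgx := hgen i x hx B hBS
  have hgxs := hgen i (xs i) (hxs i) B hBS
  have hx1 := (hBx i).1
  have hx2 := (hBx i).2
  push_neg at hfail
  dsimp only
  by_cases hlt : xs i i < x i
  · rw [if_pos hlt]
    have h1 : xs i i < B.1 i := by
      by_contra h
      push_neg at h
      have := hfail h
      exact absurd (lt_trans hlt (lt_of_le_of_ne hx2 hgx.2)) (not_lt.mpr this.le)
    constructor
    · rw [min_eq_right hlt.le]; exact h1
    · rw [max_eq_left hlt.le]; exact lt_of_le_of_ne hx1 (Ne.symm hgx.1)
  · rw [if_neg hlt]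
    have hgt : x i < xs i i := lt_of_le_of_ne (not_lt.mp hlt) (Ne.symm (hstar i).1)
    have h2 : B.2 i < xs i i := by
      by_contra h
      push_neg at h
      have hb1 : B.1 i ≤ xs i i := le_trans hx1 hgt.le
      exact absurd (hfail hb1) (not_lt.mpr h)
    constructor
    · rw [min_eq_left hgt.le]; exact lt_of_le_of_ne hx2 hgx.2
    · rw [max_eq_right hgt.le]; exact h2
end

section
/- Let n ≥ 2, d ≥ 2, P_d = [n]^d, and L_d the set of axis-parallel grid lines intersecting P_d. Define f : P_d → ℝ^2 by f(x) = (Σ_{i=1}^d ε^{i−1} x_i, Σ_{i=1}^d ε^{d−i} x_i) where ε = 1/(n+1), and for each L ∈ L_d let g(L) be the smallest axis-parallel rectangle in ℝ^2 containing f(P_d ∩ L). Then f is injective, and for all x ∈ P_d and L ∈ L_d: x ∈ L if and only if f(x) ∈ g(L). -/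
/-! With `ε = 1/(n+1)`, the sum `∑ εⁱ xᵢ` reads the digits `xᵢ ∈ [0, n]` as a base-`(n+1)`
expansion, so it is strictly monotone for the lexicographic order on the grid; the second
coordinate of `f` does the same for the reversed order of coordinates. The points of a grid line
in direction `i` range from `a[i ↦ 1]` to `a[i ↦ n]`, so its bounding rectangle has these two
images as corners. A grid point off the line differs from `a` at some `j ≠ i`: if `j < i` it is
lexicographically on the same side of both corners and the first coordinate of `f` leaves the
rectangle, if `j > i` the reversed order and the second coordinate do. -/

open Function Set

section Lex

variable {ι α : Type*} [LinearOrder ι] [WellFoundedLT ι] [LinearOrder α]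

theorem toLex_lt_and_lt_or_gt_and_gt {x y z : ι → α} {i j : ι} (hyz : ∀ k < i, y k = z k)
    (hj : j < i) (hne : x j ≠ y j) :
    (toLex x < toLex y ∧ toLex x < toLex z) ∨ (toLex y < toLex x ∧ toLex z < toLex x) := by
  have first_diff_le : ∀ {k}, (∀ m < k, x m = y m) → k ≤ j := fun hk =>
    not_lt.1 fun hjk => hne (hk j hjk)
  rcases lt_trichotomy (toLex x) (toLex y) with h | h | h
  · obtain ⟨k, hk, hlt⟩ := h
    have hki : k < i := (first_diff_le hk).trans_lt hj
    refine .inl ⟨⟨k, hk, hlt⟩, k, fun m hm => (hk m hm).trans (hyz m (hm.trans hki)), ?_⟩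
    simpa [hyz k hki] using hlt
  · exact absurd (congrFun (toLex.injective h) j) hne
  · obtain ⟨k, hk, hlt⟩ := h
    have hki : k < i := (first_diff_le fun m hm => (hk m hm).symm).trans_lt hj
    refine .inr ⟨⟨k, hk, hlt⟩, k, fun m hm => (hyz m (hm.trans hki)).symm.trans (hk m hm), ?_⟩
    simpa [hyz k hki] using hlt

end Lex

section RadixSum

variable {d n : ℕ}

noncomputable def radixSum (ε : ℝ) (x : Fin d → ℕ) : ℝ :=
  ∑ i : Fin d, ε ^ (i : ℕ) * x i

theorem radixSum_succ (ε : ℝ) (x : Fin (d + 1) → ℕ) :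
    radixSum ε x = x 0 + ε * radixSum ε (Fin.tail x) := by
  simp [radixSum, Fin.sum_univ_succ, pow_succ', Finset.mul_sum, Fin.tail, mul_assoc]

theorem radixSum_nonneg {ε : ℝ} (hε : 0 ≤ ε) (x : Fin d → ℕ) : 0 ≤ radixSum ε x := by
  unfold radixSum; positivity

theorem radixSum_mono {ε : ℝ} (hε : 0 ≤ ε) : Monotone (radixSum (d := d) ε) := fun _ _ h =>
  Finset.sum_le_sum fun i _ => mul_le_mul_of_nonneg_left (Nat.cast_le.2 (h i)) (pow_nonneg hε _)

theorem radixSum_comp_rev (ε : ℝ) (x : Fin d → ℕ) :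
    radixSum ε (x ∘ Fin.rev) = ∑ i : Fin d, ε ^ (d - 1 - (i : ℕ)) * x i := by
  refine Fintype.sum_bijective Fin.rev Fin.rev_bijective _ _ fun i => ?_
  have := i.isLt
  simp only [comp_apply, Fin.val_rev]
  congr 2
  omega

theorem radixSum_lt {x : Fin d → ℕ} (hx : ∀ i, x i ≤ n) :
    radixSum (1 / (n + 1)) x < n + 1 := by
  induction d with
  | zero => simp [radixSum]; positivity
  | succ d ih =>
    have htail := ih (x := Fin.tail x) fun i => hx _
    have hx0 : (x 0 : ℝ) ≤ n := Nat.cast_le.2 (hx 0)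
    have hε : (1 / (n + 1) : ℝ) * (n + 1) = 1 := one_div_mul_cancel (by positivity)
    rw [radixSum_succ]
    nlinarith [mul_lt_mul_of_pos_left htail (by positivity : (0 : ℝ) < 1 / (n + 1))]

theorem radixSum_lt_radixSum {x y : Fin d → ℕ} (hx : ∀ i, x i ≤ n) (h : toLex x < toLex y) :
    radixSum (1 / (n + 1)) x < radixSum (1 / (n + 1)) y := by
  induction d with
  | zero => obtain ⟨k, -⟩ := h; exact k.elim0
  | succ d ih =>
    obtain ⟨k, hk, hlt⟩ := h
    have hε : (0 : ℝ) < 1 / (n + 1) := by positivity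
    rw [radixSum_succ, radixSum_succ]
    cases k using Fin.cases with
    | zero =>
      have hx0 : (x 0 : ℝ) + 1 ≤ y 0 := by exact_mod_cast hlt
      have htail := radixSum_lt (x := Fin.tail x) fun i => hx _
      have hε1 : (1 / (n + 1) : ℝ) * (n + 1) = 1 := one_div_mul_cancel (by positivity)
      nlinarith [mul_lt_mul_of_pos_left htail hε, radixSum_nonneg hε.le (Fin.tail y)]
    | succ k =>
      have htail : radixSum (1 / (n + 1)) (Fin.tail x) < radixSum (1 / (n + 1)) (Fin.tail y) :=
        ih (fun i => hx _) ⟨k, fun m hm => hk _ (Fin.succ_lt_succ_iff.2 hm), hlt⟩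
      have hx0 : x 0 = y 0 := hk 0 k.succ_pos
      rw [hx0]
      gcongr

theorem radixSum_injOn : InjOn (radixSum (d := d) (1 / (n + 1))) {x | ∀ i, x i ≤ n} := by
  intro x hx y hy hxy
  rcases lt_trichotomy (toLex x) (toLex y) with h | h | h
  · exact absurd hxy (radixSum_lt_radixSum hx h).ne
  · exact toLex.injective h
  · exact absurd hxy (radixSum_lt_radixSum hy h).ne'

theorem radixSum_notMem_Icc {x lo hi : Fin d → ℕ} {i j : Fin d} (hx : ∀ k, x k ≤ n)
    (hhi : ∀ k, hi k ≤ n) (hlohi : ∀ k < i, lo k = hi k) (hj : j < i) (hne : x j ≠ lo j) :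
    radixSum (1 / (n + 1)) x ∉ Icc (radixSum (1 / (n + 1)) lo) (radixSum (1 / (n + 1)) hi) := by
  rintro ⟨hlo_le, hle_hi⟩
  rcases toLex_lt_and_lt_or_gt_and_gt hlohi hj hne with ⟨h, -⟩ | ⟨-, h⟩
  · exact (radixSum_lt_radixSum hx h).not_ge hlo_le
  · exact (radixSum_lt_radixSum hhi h).not_ge hle_hi

end RadixSum

section GridLine

def gridLine {d : ℕ} (n : ℕ) (i : Fin d) (a : Fin d → ℕ) : Set (Fin d → ℕ) :=
  {y | (∀ j, 1 ≤ y j ∧ y j ≤ n) ∧ ∀ j, j ≠ i → y j = a j}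

variable {d n : ℕ} {i : Fin d} {a : Fin d → ℕ}

theorem isLeast_gridLine (ha : ∀ j, 1 ≤ a j ∧ a j ≤ n) :
    IsLeast (gridLine n i a) (update a i 1) := by
  refine ⟨⟨fun j => ?_, fun j hj => update_of_ne hj _ _⟩, fun y hy =>
    update_le_iff.2 ⟨(hy.1 i).1, fun j hj => (hy.2 j hj).ge⟩⟩
  rcases eq_or_ne j i with rfl | hj
  · simpa using (ha j).1.trans (ha j).2
  · simpa [hj] using ha j

theorem isGreatest_gridLine (ha : ∀ j, 1 ≤ a j ∧ a j ≤ n) :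
    IsGreatest (gridLine n i a) (update a i n) := by
  refine ⟨⟨fun j => ?_, fun j hj => update_of_ne hj _ _⟩, fun y hy =>
    le_update_iff.2 ⟨(hy.1 i).2, fun j hj => (hy.2 j hj).le⟩⟩
  rcases eq_or_ne j i with rfl | hj
  · simpa using (ha j).1.trans (ha j).2
  · simpa [hj] using ha j

theorem mem_gridLine_of_radixSum_mem_Icc {x : Fin d → ℕ} (hx : ∀ k, 1 ≤ x k ∧ x k ≤ n)
    (ha : ∀ k, 1 ≤ a k ∧ a k ≤ n)
    (h₁ : radixSum (1 / (n + 1)) x ∈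
      Icc (radixSum (1 / (n + 1)) (update a i 1)) (radixSum (1 / (n + 1)) (update a i n)))
    (h₂ : radixSum (1 / (n + 1)) (x ∘ Fin.rev) ∈
      Icc (radixSum (1 / (n + 1)) (update a i 1 ∘ Fin.rev))
        (radixSum (1 / (n + 1)) (update a i n ∘ Fin.rev))) :
    x ∈ gridLine n i a := by
  refine ⟨hx, fun j hji => by_contra fun hne => ?_⟩
  have hhi : ∀ k, update a i n k ≤ n := fun k => ((isGreatest_gridLine ha).1.1 k).2
  rcases hji.lt_or_gt with hj | hj
  · exact radixSum_notMem_Icc (fun k => (hx k).2) hhi (fun k hk => by simp [hk.ne]) hj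
      (by simpa [hji] using hne) h₁
  · refine radixSum_notMem_Icc (i := i.rev) (j := j.rev) (fun k => (hx _).2) (fun k => hhi _)
      (fun k hk => ?_) (Fin.rev_lt_rev.2 hj) (by simpa [hji] using hne) h₂
    simp [Fin.lt_rev_iff.1 hk |>.ne']

end GridLine

theorem grid_lines_map_to_plane_general (d n : ℕ) :
    let ε : ℝ := 1 / (n + 1)
    let f : (Fin d → ℕ) → ℝ × ℝ := fun x =>
      (∑ i : Fin d, ε ^ (i : ℕ) * x i, ∑ i : Fin d, ε ^ (d - 1 - (i : ℕ)) * x i)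
    let grid : Set (Fin d → ℕ) := {x | ∀ i, 1 ≤ x i ∧ x i ≤ n}
    let onLine : Fin d → (Fin d → ℕ) → (Fin d → ℕ) → Prop :=
      fun i a y => y ∈ grid ∧ ∀ j, j ≠ i → y j = a j
    Set.InjOn f grid ∧
    ∀ x ∈ grid, ∀ i : Fin d, ∀ a ∈ grid,
      ((∀ j, j ≠ i → x j = a j) ↔
        (sInf ((fun y => (f y).1) '' {y | onLine i a y}) ≤ (f x).1 ∧
         (f x).1 ≤ sSup ((fun y => (f y).1) '' {y | onLine i a y}) ∧
         sInf ((fun y => (f y).2) '' {y | onLine i a y}) ≤ (f x).2 ∧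
         (f x).2 ≤ sSup ((fun y => (f y).2) '' {y | onLine i a y}))) := by
  intro ε f grid onLine
  have hf₁ : (fun y => (f y).1) = radixSum ε := rfl
  have hf₂ : (fun y => (f y).2) = fun y => radixSum ε (y ∘ Fin.rev) :=
    funext fun y => (radixSum_comp_rev ε y).symm
  have hmono₁ : Monotone (radixSum (d := d) ε) := radixSum_mono (by positivity)
  have hmono₂ : Monotone fun y : Fin d → ℕ => radixSum ε (y ∘ Fin.rev) :=
    fun _ _ h => hmono₁ fun k => h _
  refine ⟨fun x hx y hy hxy => radixSum_injOn (fun k => (hx k).2) (fun k => (hy k).2)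
    (congrArg Prod.fst hxy), fun x hx i a ha => ?_⟩
  have hlo := isLeast_gridLine (i := i) ha
  have hhi := isGreatest_gridLine (i := i) ha
  have hline : {y | onLine i a y} = gridLine n i a := rfl
  have hfx : (f x).2 = radixSum ε (x ∘ Fin.rev) := (radixSum_comp_rev ε x).symm
  rw [hf₁, hf₂, hfx, hline, (hmono₁.map_isLeast hlo).csInf_eq, (hmono₁.map_isGreatest hhi).csSup_eq,
    (hmono₂.map_isLeast hlo).csInf_eq, (hmono₂.map_isGreatest hhi).csSup_eq]
  constructor
  · intro h
    have hx' : x ∈ gridLine n i a := ⟨hx, h⟩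
    exact ⟨hmono₁ (hlo.2 hx'), hmono₁ (hhi.2 hx'), hmono₂ (hlo.2 hx'), hmono₂ (hhi.2 hx')⟩
  · rintro ⟨h₁, h₂, h₃, h₄⟩
    exact (mem_gridLine_of_radixSum_mem_Icc hx ha ⟨h₁, h₂⟩ ⟨h₃, h₄⟩).2

/-- The grid-line system `(P_d, L_d)` maps into two dimensions: with `ε = 1/(n+1)` and
`f(x) = (∑ i ε^i x_i, ∑ i ε^(d-1-i) x_i)` (indices `0, …, d-1`), `f` is injective on the
grid `[n]^d`, and a grid point `x` lies on the grid line through `a` in direction `i`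
iff `f x` lies in the smallest axis-parallel rectangle containing the image of that
line's grid points. -/
theorem grid_lines_map_to_plane (d n : ℕ) (hd : 2 ≤ d) (hn : 2 ≤ n) :
    let ε : ℝ := 1 / (n + 1)
    let f : (Fin d → ℕ) → ℝ × ℝ := fun x =>
      (∑ i : Fin d, ε ^ (i : ℕ) * x i, ∑ i : Fin d, ε ^ (d - 1 - (i : ℕ)) * x i)
    let grid : Set (Fin d → ℕ) := {x | ∀ i, 1 ≤ x i ∧ x i ≤ n}
    let onLine : Fin d → (Fin d → ℕ) → (Fin d → ℕ) → Prop :=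
      fun i a y => y ∈ grid ∧ ∀ j, j ≠ i → y j = a j
    Set.InjOn f grid ∧
    ∀ x ∈ grid, ∀ i : Fin d, ∀ a ∈ grid,
      ((∀ j, j ≠ i → x j = a j) ↔
        (sInf ((fun y => (f y).1) '' {y | onLine i a y}) ≤ (f x).1 ∧
         (f x).1 ≤ sSup ((fun y => (f y).1) '' {y | onLine i a y}) ∧
         sInf ((fun y => (f y).2) '' {y | onLine i a y}) ≤ (f x).2 ∧
         (f x).2 ≤ sSup ((fun y => (f y).2) '' {y | onLine i a y}))) :=
  grid_lines_map_to_plane_general d n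
end
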